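/- Let x ∈ ℝⁿ with ‖x‖ ≤ 1 and x₁ ≥ α for some α ∈ [−1/n, 1]. Then (x₁ − τ)²/ (δ(1−σ)) + (x₂² + ⋯ + xₙ²)/δ ≤ 1, where τ = (1+nα)/(n+1), σ = 2(1+nα)/((n+1)(1+α)), δ = n²/(n²−1)(1−α²), n ≥ 2, α < 1. -/

import Mathlib

open Matrix

set_option maxHeartbeats 1000000 in
/-- Coordinate form of the Löwner-John containment for the unit ball: the cap
`{‖x‖ ≤ 1, x₁ ≥ α}` is contained in the axis-aligned ellipsoid centered at
`τe₁` with semi-axes `√(δ(1−σ))` along `e₁` and `√δ` orthogonally. -/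
theorem cap_in_axis_aligned_ellipsoid (n : ℕ) (hn : 2 ≤ n) (α : ℝ)
    (hα₁ : -1 / (n : ℝ) ≤ α) (hα₂ : α < 1) (hα₃ : α ≤ 1)
    (τ σ δ : ℝ)
    (hτ : τ = (1 + n * α) / (n + 1))
    (hσ : σ = 2 * (1 + n * α) / ((n + 1) * (1 + α)))
    (hδ : δ = (n : ℝ) ^ 2 / ((n : ℝ) ^ 2 - 1) * (1 - α ^ 2))
    (x : Fin n → ℝ) (hx : x ⬝ᵥ x ≤ 1)
    (hx1 : α ≤ x ⟨0, by omega⟩) :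
    (x ⟨0, by omega⟩ - τ) ^ 2 / (δ * (1 - σ)) +
      (∑ i ∈ Finset.univ.erase (⟨0, by omega⟩ : Fin n), (x i) ^ 2) / δ ≤ 1 := by
  set N : ℝ := (n : ℝ) with hN
  have hN2 : (2 : ℝ) ≤ N := by rw [hN]; exact_mod_cast hn
  set i0 : Fin n := ⟨0, by omega⟩ with hi0
  set t : ℝ := x i0 with ht
  set s : ℝ := ∑ i ∈ Finset.univ.erase i0, (x i) ^ 2 with hs
  -- basic facts
  have hs0 : 0 ≤ s := Finset.sum_nonneg fun i _ => sq_nonneg _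
  have hdot : x ⬝ᵥ x = t ^ 2 + s := by
    rw [dotProduct]
    rw [← Finset.add_sum_erase _ _ (Finset.mem_univ i0)]
    simp [hs, sq]
    rw [ht]; ring
  have hts : t ^ 2 + s ≤ 1 := by rw [← hdot]; exact hx
  have ht1 : t ≤ 1 := by nlinarith [sq_nonneg (t - 1)]
  have hNpos : (0:ℝ) < N := by linarith
  have hinv : -1 / N = -(1 / N) := by ring
  have hinv2 : 1 / N < 1 := by rw [div_lt_one hNpos]; linarith
  have hαneg : -1 < α := by
    have : -(1/N) ≤ α := by rw [← hinv]; exact hα₁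
    linarith
  have h1α : (0:ℝ) < 1 + α := by linarith
  have h1α' : (0:ℝ) < 1 - α := by linarith
  have hN1 : (0:ℝ) < N - 1 := by linarith
  have hN1' : (0:ℝ) < N + 1 := by linarith
  have hNα : 0 ≤ 1 + N * α := by
    have h := mul_le_mul_of_nonneg_left hα₁ (le_of_lt hNpos)
    have h2 : N * (-1 / N) = -1 := by field_simp
    rw [h2] at h
    linarith
  have hne1 : N + 1 ≠ 0 := ne_of_gt hN1'
  have hne2 : N - 1 ≠ 0 := ne_of_gt hN1
  have hne3 : N ^ 2 - 1 ≠ 0 := by nlinarith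
  have hne4 : (1:ℝ) + α ≠ 0 := ne_of_gt h1α
  -- explicit values
  have hA : δ * (1 - σ) = N ^ 2 * (1 - α) ^ 2 / (N + 1) ^ 2 := by
    rw [hδ, hσ]
    field_simp
    ring
  have hApos : 0 < N ^ 2 * (1 - α) ^ 2 / (N + 1) ^ 2 := by positivity
  have hδpos : 0 < δ := by
    rw [hδ]
    have h1 : (0:ℝ) < N ^ 2 - 1 := by nlinarith
    have h2 : (0:ℝ) < 1 - α ^ 2 := by nlinarith
    positivity
  -- the main scaled inequality
  have main : 2 * (1 + N * α) * (t - α) * (t - 1) + (N - 1) * (1 - α) * (t ^ 2 + s - 1) ≤ 0 := by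
    have h1 : 0 ≤ 2 * (1 + N * α) * (t - α) * (1 - t) := by
      apply mul_nonneg
      apply mul_nonneg
      · linarith
      · linarith
      · linarith
    nlinarith [mul_nonneg (mul_nonneg (le_of_lt hN1) (le_of_lt h1α')) (by linarith : 0 ≤ 1 - (t ^ 2 + s))]
  -- the identity
  have hid : (t - τ) ^ 2 * δ + N ^ 2 * (1 - α) ^ 2 / (N + 1) ^ 2 * s
      - N ^ 2 * (1 - α) ^ 2 / (N + 1) ^ 2 * δ
      = N ^ 2 * (1 - α) / ((N - 1) * (N + 1) ^ 2) *
        (2 * (1 + N * α) * (t - α) * (t - 1) + (N - 1) * (1 - α) * (t ^ 2 + s - 1)) := by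
    rw [hδ, hτ]
    field_simp
    ring
  have hfac : 0 ≤ N ^ 2 * (1 - α) / ((N - 1) * (N + 1) ^ 2) := by positivity
  have hprod : N ^ 2 * (1 - α) / ((N - 1) * (N + 1) ^ 2) *
      (2 * (1 + N * α) * (t - α) * (t - 1) + (N - 1) * (1 - α) * (t ^ 2 + s - 1)) ≤ 0 :=
    mul_nonpos_of_nonneg_of_nonpos hfac main
  have hkey : (t - τ) ^ 2 * δ + N ^ 2 * (1 - α) ^ 2 / (N + 1) ^ 2 * s
      ≤ N ^ 2 * (1 - α) ^ 2 / (N + 1) ^ 2 * δ := by linarith [hid, hprod]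
  -- conclude
  rw [hA, div_add_div _ _ (ne_of_gt hApos) (ne_of_gt hδpos),
    div_le_one (mul_pos hApos hδpos)]
  linarith [hkey]
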